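/- If a superior edge set 𝓔 = E_{k_1} ∪ ... ∪ E_{k_q} (the k_i pairwise distinct, each E_{k_i} a k_i-superior edge set with respect to G) is deleted from a graph G, then the core number of every vertex decreases by at most 1. -/

import Mathlib

open SimpleGraph

/-- The core number of a vertex: the largest `k` such that the vertex lies in a
subgraph of `G` with minimum degree at least `k`. -/
noncomputable def coreNumber {V : Type*} (G : SimpleGraph V) (v : V) : ℕ :=
  sSup {k : ℕ | ∃ H : G.Subgraph, v ∈ H.verts ∧ ∀ w ∈ H.verts, k ≤ (H.neighborSet w).ncard}

/-- `S` is a `k`-superior edge set of existing edges of `G`. -/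
def IsKSuperiorDeleteSet {V : Type*} (G : SimpleGraph V) (k : ℕ) (S : Set (Sym2 V)) : Prop :=
  (∀ e ∈ S, e ∈ G.edgeSet ∧ ∃ u v : V, e = s(u,v) ∧
      coreNumber G u = k ∧ coreNumber G u ≤ coreNumber G v) ∧
  ∀ e₁ ∈ S, ∀ e₂ ∈ S, e₁ ≠ e₂ → ∀ u : V, u ∈ e₁ → u ∈ e₂ → k < coreNumber G u

/-!
Let `c` be the core number of `v` and keep, in `G` minus the deleted edges, the subgraph induced
on the vertices of core number at least `c`. A vertex `w` there has at least `coreNumber G w`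
neighbours of core number at least `coreNumber G w`. A deleted edge to such a neighbour has
core number exactly `coreNumber G w`, so it belongs to the `coreNumber G w`-superior part of the
deleted set, in which two edges can only meet at vertices of larger core number. Hence `w` loses
at most one of these neighbours and keeps degree at least `c - 1`.
-/

section CoreNumber

variable {V : Type*} (G : SimpleGraph V)

lemma bddAbove_coreNumberSet [Finite V] (v : V) :
    BddAbove {k : ℕ | ∃ H : G.Subgraph, v ∈ H.verts ∧
      ∀ w ∈ H.verts, k ≤ (H.neighborSet w).ncard} := by
  refine ⟨Nat.card V, ?_⟩
  rintro k ⟨H, hv, hdeg⟩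
  calc k ≤ (H.neighborSet v).ncard := hdeg v hv
    _ ≤ (Set.univ : Set V).ncard := Set.ncard_le_ncard (Set.subset_univ _)
    _ = Nat.card V := Set.ncard_univ V

variable {G}

lemma le_coreNumber [Finite V] {v : V} {k : ℕ} (H : G.Subgraph) (hv : v ∈ H.verts)
    (hdeg : ∀ w ∈ H.verts, k ≤ (H.neighborSet w).ncard) : k ≤ coreNumber G v :=
  le_csSup (bddAbove_coreNumberSet G v) ⟨H, hv, hdeg⟩

variable (G)

lemma exists_subgraph_coreNumber_le_ncard_neighborSet [Finite V] (v : V) :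
    ∃ H : G.Subgraph, v ∈ H.verts ∧ ∀ w ∈ H.verts, coreNumber G v ≤ (H.neighborSet w).ncard :=
  Nat.sSup_mem (s := {k : ℕ | ∃ H : G.Subgraph, v ∈ H.verts ∧
      ∀ w ∈ H.verts, k ≤ (H.neighborSet w).ncard})
    ⟨0, G.singletonSubgraph v, rfl, fun _ _ => Nat.zero_le _⟩ (bddAbove_coreNumberSet G v)

lemma coreNumber_le_ncard_adj_coreNumber_le [Finite V] (u : V) :
    coreNumber G u ≤ {x | G.Adj u x ∧ coreNumber G u ≤ coreNumber G x}.ncard := by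
  obtain ⟨H, hu, hdeg⟩ := exists_subgraph_coreNumber_le_ncard_neighborSet G u
  have hsub : H.neighborSet u ⊆ {x | G.Adj u x ∧ coreNumber G u ≤ coreNumber G x} :=
    fun x hx => ⟨H.adj_sub hx, le_coreNumber H (H.edge_vert hx.symm) hdeg⟩
  exact (hdeg u hu).trans (Set.ncard_le_ncard hsub)

theorem coreNumber_le_coreNumber_deleteEdges_add_one [Finite V] (S : Set (Sym2 V))
    (hS : ∀ w, {x | coreNumber G w ≤ coreNumber G x ∧ s(w, x) ∈ S}.Subsingleton) (v : V) :
    coreNumber G v ≤ coreNumber (G.deleteEdges S) v + 1 := by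
  set c := coreNumber G v
  let J := (⊤ : (G.deleteEdges S).Subgraph).induce {w | c ≤ coreNumber G w}
  suffices hdeg : ∀ w ∈ J.verts, c - 1 ≤ (J.neighborSet w).ncard by
    have := le_coreNumber J (le_refl c) hdeg
    omega
  intro w (hw : c ≤ coreNumber G w)
  set N := {x | G.Adj w x ∧ coreNumber G w ≤ coreNumber G x}
  set B := {x | coreNumber G w ≤ coreNumber G x ∧ s(w, x) ∈ S}
  have hN : coreNumber G w ≤ N.ncard := coreNumber_le_ncard_adj_coreNumber_le G w
  have hB : B.ncard ≤ 1 := Set.ncard_le_one_iff_subsingleton.mpr (hS w)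
  have hNB : N \ B ⊆ J.neighborSet w := fun x ⟨⟨hadj, hx⟩, hxB⟩ =>
    ⟨hw, hw.trans hx, deleteEdges_adj.mpr ⟨hadj, fun hxS => hxB ⟨hx, hxS⟩⟩⟩
  calc c - 1 ≤ N.ncard - B.ncard := by omega
    _ ≤ (N \ B).ncard := Set.le_ncard_sdiff B N
    _ ≤ (J.neighborSet w).ncard := Set.ncard_le_ncard hNB

end CoreNumber

namespace IsKSuperiorDeleteSet

variable {V : Type*} {G : SimpleGraph V} {k : ℕ} {S : Set (Sym2 V)}

lemma coreNumber_eq_of_le (hS : IsKSuperiorDeleteSet G k S) {w x : V} (he : s(w, x) ∈ S)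
    (hwx : coreNumber G w ≤ coreNumber G x) : coreNumber G w = k := by
  obtain ⟨-, a, b, hab, hak, hab_le⟩ := hS.1 _ he
  rcases Sym2.eq_iff.mp hab with ⟨rfl, -⟩ | ⟨rfl, rfl⟩
  · exact hak
  · omega

lemma eq_of_mk_mem_of_coreNumber_eq (hS : IsKSuperiorDeleteSet G k S) {w x y : V}
    (hx : s(w, x) ∈ S) (hy : s(w, y) ∈ S) (hw : coreNumber G w = k) : x = y := by
  by_contra hxy
  have hne : s(w, x) ≠ s(w, y) := fun h => hxy (Sym2.congr_right.mp h)
  have := hS.2 _ hx _ hy hne w (Sym2.mem_mk_left w x) (Sym2.mem_mk_left w y)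
  omega

end IsKSuperiorDeleteSet

lemma subsingleton_superior_mem_biUnion {V : Type*} {G : SimpleGraph V} {ks : Finset ℕ}
    {F : ℕ → Set (Sym2 V)} (hF : ∀ k ∈ ks, IsKSuperiorDeleteSet G k (F k)) (w : V) :
    {x | coreNumber G w ≤ coreNumber G x ∧ s(w, x) ∈ ⋃ k ∈ ks, F k}.Subsingleton := by
  have mem_F : ∀ x, coreNumber G w ≤ coreNumber G x → s(w, x) ∈ ⋃ k ∈ ks, F k →
      coreNumber G w ∈ ks ∧ s(w, x) ∈ F (coreNumber G w) := by
    intro x hwx hx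
    obtain ⟨k, hk, hxk⟩ := Set.mem_iUnion₂.mp hx
    obtain rfl := (hF k hk).coreNumber_eq_of_le hxk hwx
    exact ⟨hk, hxk⟩
  rintro x ⟨hwx, hx⟩ y ⟨hwy, hy⟩
  obtain ⟨hk, hxF⟩ := mem_F x hwx hx
  exact (hF _ hk).eq_of_mk_mem_of_coreNumber_eq hxF (mem_F y hwy hy).2 rfl

theorem superiorDeleteSet_core_decrease_le_one {V : Type*} [Fintype V] (G : SimpleGraph V)
    (ks : Finset ℕ) (F : ℕ → Set (Sym2 V))
    (hF : ∀ k ∈ ks, IsKSuperiorDeleteSet G k (F k))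
    (S : Set (Sym2 V)) (hS : S = ⋃ k ∈ ks, F k) (v : V) :
    coreNumber G v ≤ coreNumber (G.deleteEdges S) v + 1 := by
  subst hS
  exact coreNumber_le_coreNumber_deleteEdges_add_one G _ (subsingleton_superior_mem_biUnion hF) v
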